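/- arXiv:1704.01100 — 2 statements merged into one kernel-verified Lean document; each statement's English description precedes it below -/
import Mathlib

section
/- Let G be a finite group, m ≥ 1, and ρ_1, …, ρ_m irreducible representations of G on nonzero finite-dimensional complex vector spaces, with characters χ_1, …, χ_m. Let ψ_j : Z(G) → ℂ^× be the homomorphisms on the center Z(G) determined by ρ_j(z) = ψ_j(z)·id for z ∈ Z(G). Then the following are equivalent: (A) for all h, k ∈ G, if there exists λ ∈ ℂ with χ_j(γh) = λ·χ_j(γk) for every γ ∈ G and every j, then h = k; (B) both (i) for every h ≠ 1 in G there is j with ρ_j(h) ≠ id, and (ii) the characters ψ_j·ψ_1⁻¹ (j = 1, …, m) generate the full character group Hom(Z(G), ℂ^×). -/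
/-!
If `χ_j(γh) = λ χ_j(γk)` for all `γ, j`, put `u = k⁻¹ h`; then `tr ρ_j(u^i) = λ^i · dim W_j`
for all `i`, so `λ` is a root of unity and the average of the powers of `λ⁻¹ ρ_j(u)` is an
idempotent of full trace, hence the identity; thus `ρ_j(u) = λ`. By (i) a group element acting
by scalars in every `ρ_j` is central, and then `ψ_j(u) = λ` for all `j`, so `u` is killed by
every `ψ_j ψ_1⁻¹`; by (ii) and duality for the finite abelian group `Z(G)`, `u = 1`. Conversely,
a nontrivial element of `⋂ ker ρ_j`, or a nontrivial central `z` on which all `ψ_j` agree,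
contradicts (A) with `λ = 1`, resp. `λ = ψ_1(z)`.
-/

open Finset

namespace Module.End

variable {K V : Type*} [Field K] [CharZero K] [AddCommGroup V] [Module K V]
  [FiniteDimensional K V]

theorem eq_one_of_isIdempotentElem_of_trace_eq_finrank {e : Module.End K V}
    (he : IsIdempotentElem e) (htr : LinearMap.trace K V e = finrank K V) : e = 1 := by
  have h : 1 - e = 0 := LinearMap.IsIdempotentElem.eq_zero_of_trace_eq_zero he.one_sub <| by
    rw [map_sub, LinearMap.trace_one, htr, sub_self]
  exact (sub_eq_zero.mp h).symm

theorem eq_one_of_pow_eq_one_of_trace_pow {f : Module.End K V} {n : ℕ} (hn : 0 < n)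
    (hf : f ^ n = 1) (htr : ∀ i, LinearMap.trace K V (f ^ i) = finrank K V) : f = 1 := by
  set S := ∑ i ∈ range n, f ^ i
  have hfS : f * S = S := by
    have := mul_geom_sum f n
    rwa [hf, sub_self, sub_mul, one_mul, sub_eq_zero] at this
  have hpowS : ∀ i, f ^ i * S = S := by
    intro i
    induction i with
    | zero => rw [pow_zero, one_mul]
    | succ i ih => rw [pow_succ, mul_assoc, hfS, ih]
  have hnK : (n : K) ≠ 0 := Nat.cast_ne_zero.mpr hn.ne'
  set e := (n : K)⁻¹ • S
  have hfe : f * e = e := by rw [mul_smul_comm, hfS]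
  have he : IsIdempotentElem e := by
    have hSS : S * S = (n : K) • S := by
      rw [Finset.sum_mul, Finset.sum_congr rfl fun i _ => hpowS i, sum_const, card_range,
        ← Nat.cast_smul_eq_nsmul K]
    rw [IsIdempotentElem, smul_mul_smul_comm, hSS, smul_smul, mul_assoc, inv_mul_cancel₀ hnK,
      mul_one]
  have htre : LinearMap.trace K V e = finrank K V := by
    rw [map_smul, map_sum, Finset.sum_congr rfl fun i _ => htr i, sum_const, card_range,
      nsmul_eq_mul, smul_eq_mul, inv_mul_cancel_left₀ hnK]
  have he1 := eq_one_of_isIdempotentElem_of_trace_eq_finrank he htre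
  rwa [he1, mul_one] at hfe

theorem eq_smul_one_of_trace_pow [Nontrivial V] {f : Module.End K V} (hf : IsOfFinOrder f)
    {l : K} (htr : ∀ i, LinearMap.trace K V (f ^ i) = l ^ i * finrank K V) : f = l • 1 := by
  have hd : (finrank K V : K) ≠ 0 := Nat.cast_ne_zero.mpr Module.finrank_pos.ne'
  have hln : l ^ orderOf f = 1 := by
    have := htr (orderOf f)
    rw [pow_orderOf_eq_one, LinearMap.trace_one] at this
    exact (mul_eq_right₀ hd).mp this.symm
  have hl : l ≠ 0 := by
    rintro rfl
    simp [hf.orderOf_pos.ne'] at hln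
  have hg : l⁻¹ • f = 1 := by
    refine eq_one_of_pow_eq_one_of_trace_pow hf.orderOf_pos ?_ fun i => ?_
    · rw [smul_pow, pow_orderOf_eq_one, inv_pow, hln, inv_one, one_smul]
    · rw [smul_pow, map_smul, htr, smul_eq_mul, inv_pow, inv_mul_cancel_left₀ (pow_ne_zero i hl)]
  rw [← hg, smul_smul, mul_inv_cancel₀ hl, one_smul]

end Module.End

theorem Representation.eq_smul_one_of_trace_mul_eq {K G V : Type*} [Field K] [CharZero K]
    [Monoid G] [AddCommGroup V] [Module K V] [FiniteDimensional K V] [Nontrivial V]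
    (ρ : Representation K G V) {u : G} (hu : IsOfFinOrder u) {l : K}
    (htr : ∀ δ, LinearMap.trace K V (ρ (δ * u)) = l * LinearMap.trace K V (ρ δ)) :
    ρ u = l • 1 := by
  refine Module.End.eq_smul_one_of_trace_pow (ρ.isOfFinOrder hu) fun i => ?_
  induction i with
  | zero => rw [pow_zero, pow_zero, one_mul, LinearMap.trace_one]
  | succ i ih => rw [← map_pow, pow_succ, htr, map_pow, ih, pow_succ, mul_comm _ l, mul_assoc]

theorem CommGroup.subgroup_monoidHom_eq_top_iff {A F : Type*} [CommGroup A] [Finite A] [Field F]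
    [IsAlgClosed F] [CharZero F] (Φ : Subgroup (A →* Fˣ)) :
    Φ = ⊤ ↔ ∀ a : A, (∀ φ ∈ Φ, φ a = 1) → a = 1 := by
  have : NeZero (Monoid.exponent A : F) :=
    ⟨Nat.cast_ne_zero.mpr Monoid.exponent_ne_zero_of_finite⟩
  simp_rw [← mem_subgroupOrderIsoSubgroupMonoidHom_symm_iff, ← Subgroup.eq_bot_iff_forall,
    map_eq_bot_iff]
  rfl

section JointlyFaithful

variable {K G ι : Type*} [CommSemiring K] [Group G] {W : ι → Type*} [∀ j, AddCommMonoid (W j)]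
  [∀ j, Module K (W j)] {ρ : ∀ j, Representation K G (W j)}

theorem eq_of_forall_representation_eq (hfaith : ∀ h : G, h ≠ 1 → ∃ j, ρ j h ≠ 1) {a b : G}
    (hab : ∀ j, ρ j a = ρ j b) : a = b := by
  by_contra hne
  obtain ⟨j, hj⟩ := hfaith (a * b⁻¹) (mul_inv_eq_one.not.mpr hne)
  exact hj (by rw [map_mul, hab, ← map_mul, mul_inv_cancel, map_one])

theorem mem_center_of_forall_representation_eq_smul_one
    (hfaith : ∀ h : G, h ≠ 1 → ∃ j, ρ j h ≠ 1) {u : G} (hu : ∀ j, ∃ c : K, ρ j u = c • 1) :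
    u ∈ Subgroup.center G := by
  refine Subgroup.mem_center_iff.mpr fun g => eq_of_forall_representation_eq hfaith fun j => ?_
  obtain ⟨c, hc⟩ := hu j
  rw [map_mul, map_mul, hc, mul_smul_comm, smul_mul_assoc, mul_one, one_mul]

end JointlyFaithful

theorem full_projective_embedding_iff_general
    {G : Type*} [Group G] [Fintype G] {m : ℕ} (hm : 0 < m)
    (W : Fin m → Type*) [∀ j, AddCommGroup (W j)] [∀ j, Module ℂ (W j)]
    [∀ j, FiniteDimensional ℂ (W j)] [∀ j, Nontrivial (W j)]
    (ρ : ∀ j, Representation ℂ G (W j))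
    (ψ : Fin m → (↥(Subgroup.center G) →* ℂˣ))
    (hψ : ∀ j, ∀ z : ↥(Subgroup.center G),
      ρ j (z : G) = ((ψ j z : ℂ) • (1 : W j →ₗ[ℂ] W j))) :
    (∀ h k : G,
        (∃ l : ℂ, ∀ γ : G, ∀ j,
          LinearMap.trace ℂ (W j) (ρ j (γ * h))
            = l * LinearMap.trace ℂ (W j) (ρ j (γ * k))) → h = k)
      ↔ ((∀ h : G, h ≠ 1 → ∃ j, ρ j h ≠ 1) ∧
          Subgroup.closure
            (Set.range fun j : Fin m => ψ j * (ψ ⟨0, hm⟩)⁻¹) = ⊤) := by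
  set j₀ : Fin m := ⟨0, hm⟩
  set Ψ := Subgroup.closure (Set.range fun j : Fin m => ψ j * (ψ j₀)⁻¹)
  have hann : ∀ z, (∀ φ ∈ Ψ, φ z = 1) ↔ ∀ j, ψ j z = ψ j₀ z := by
    refine fun z => ⟨fun hz j => mul_inv_eq_one.mp (hz _ (Subgroup.subset_closure ⟨j, rfl⟩)),
      fun hz φ hφ => ?_⟩
    induction hφ using Subgroup.closure_induction with
    | mem _ hφ => obtain ⟨j, rfl⟩ := hφ; exact mul_inv_eq_one.mpr (hz j)
    | one => rfl
    | mul _ _ _ _ h₁ h₂ => rw [MonoidHom.mul_apply, h₁, h₂, mul_one]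
    | inv _ _ h => rw [MonoidHom.inv_apply, h, inv_one]
  open scoped IsMulCommutative in rw [CommGroup.subgroup_monoidHom_eq_top_iff]
  constructor
  · intro hA
    refine ⟨fun h hne => ?_, fun z hz => ?_⟩
    · by_contra! hker
      exact hne (hA h 1 ⟨1, fun γ j => by rw [map_mul, hker j, mul_one, mul_one, one_mul]⟩)
    · refine Subtype.ext (hA z 1 ⟨ψ j₀ z, fun γ j => ?_⟩)
      rw [map_mul, hψ, (hann z).mp hz j, mul_one, mul_smul_comm, mul_one, map_smul, smul_eq_mul]
  · rintro ⟨hfaith, hgen⟩ h k ⟨l, hl⟩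
    have hscal : ∀ j, ρ j (k⁻¹ * h) = l • 1 := fun j =>
      (ρ j).eq_smul_one_of_trace_mul_eq (isOfFinOrder_of_finite _) fun δ => by
        simpa only [mul_assoc, inv_mul_cancel, mul_one] using hl (δ * k⁻¹) j
    have hcen : k⁻¹ * h ∈ Subgroup.center G :=
      mem_center_of_forall_representation_eq_smul_one hfaith fun j => ⟨l, hscal j⟩
    have hψl : ∀ j, (ψ j ⟨_, hcen⟩ : ℂ) = l := fun j =>
      smul_left_injective ℂ one_ne_zero ((hψ j _).symm.trans (hscal j))
    have h1 := hgen ⟨_, hcen⟩ ((hann _).mpr fun j => Units.ext ((hψl j).trans (hψl j₀).symm))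
    exact (inv_mul_eq_one.mp (congrArg Subtype.val h1)).symm

/-- Proposition 2.9 for full subrepresentations: for irreducible representations
`ρ_1, …, ρ_m` of a finite group `G` on nonzero finite-dimensional complex vector
spaces, with central characters `ψ_j`, the projective separation condition (A)
(`χ_j(γh) = λ·χ_j(γk)` for all `γ, j` implies `h = k`) holds iff both
(i) `⋂ ker ρ_j = 1` and (ii) the ratios `ψ_j ψ_1⁻¹` generate the character group
of the center `Z(G)`. -/
theorem full_projective_embedding_iff
    {G : Type*} [Group G] [Fintype G] {m : ℕ} (hm : 0 < m)
    (W : Fin m → Type*) [∀ j, AddCommGroup (W j)] [∀ j, Module ℂ (W j)]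
    [∀ j, FiniteDimensional ℂ (W j)] [∀ j, Nontrivial (W j)]
    (ρ : ∀ j, Representation ℂ G (W j))
    (hirr : ∀ j, ∀ p : Submodule ℂ (W j),
      (∀ g : G, ∀ x ∈ p, ρ j g x ∈ p) → p = ⊥ ∨ p = ⊤)
    (ψ : Fin m → (↥(Subgroup.center G) →* ℂˣ))
    (hψ : ∀ j, ∀ z : ↥(Subgroup.center G),
      ρ j (z : G) = ((ψ j z : ℂ) • (1 : W j →ₗ[ℂ] W j))) :
    (∀ h k : G,
        (∃ l : ℂ, ∀ γ : G, ∀ j,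
          LinearMap.trace ℂ (W j) (ρ j (γ * h))
            = l * LinearMap.trace ℂ (W j) (ρ j (γ * k))) → h = k)
      ↔ ((∀ h : G, h ≠ 1 → ∃ j, ρ j h ≠ 1) ∧
          Subgroup.closure
            (Set.range fun j : Fin m => ψ j * (ψ ⟨0, hm⟩)⁻¹) = ⊤) :=
  full_projective_embedding_iff_general hm W ρ ψ hψ
end

section
/- Let G be a finite group and ρ an irreducible representation of G on a finite-dimensional complex vector space W, with character χ(g) = tr(ρ(g)). If x ∈ G and λ ∈ ℂ satisfy Σ_{γ∈G} χ(gxγ)·χ(γ⁻¹) = λ · Σ_{γ∈G} χ(gγ)·χ(γ⁻¹) for every g ∈ G, then ρ(x) = μ·id_W for some μ ∈ ℂ, i.e. ρ(x) lies in the center of ρ(G). -/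
/-!
Let `A = ∑ γ, χ(γ⁻¹) • ρ γ`. Since `χ` is a class function, `A` commutes with `ρ(G)`, so by
Schur's lemma `A = c • 1`; taking traces, orthogonality of characters gives `c = |G| / dim W`,
which is nonzero. Hence `∑ γ, χ(gγ) χ(γ⁻¹) = tr (ρ g * A) = c χ(g)`, and the hypothesis becomes
`χ(gx) = λ χ(g)` for all `g`. Reindexing the sum defining `ρ x * A` then gives `ρ x * A = λ • A`,
that is `c • ρ x = (λ * c) • 1`.
-/

namespace Representation

variable {G k V : Type*} [Group G] [Field k] [AddCommGroup V] [Module k V]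
  (ρ : Representation k G V)

theorem isIrreducible_of_forall_submodule [Nontrivial V]
    (h : ∀ p : Submodule k V, (∀ g, ∀ v ∈ p, ρ g v ∈ p) → p = ⊥ ∨ p = ⊤) :
    ρ.IsIrreducible where
  exists_pair_ne := ⟨⊥, ⊤, fun hσ => bot_ne_top (congrArg Subrepresentation.toSubmodule hσ)⟩
  eq_bot_or_eq_top σ := (h σ.toSubmodule fun g _ hv => σ.apply_mem_toSubmodule g hv).imp
    (fun hp => Subrepresentation.toSubmodule_injective hp)
    (fun hp => Subrepresentation.toSubmodule_injective hp)

theorem IsIrreducible.exists_eq_smul_one [IsAlgClosed k] [FiniteDimensional k V]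
    [ρ.IsIrreducible] {B : Module.End k V} (hB : ∀ g, Commute (ρ g) B) :
    ∃ c : k, B = c • 1 := by
  obtain ⟨c, hc⟩ := IsIrreducible.algebraMap_intertwiningMap_bijective_of_isAlgClosed.2
    (B.intertwiningMap_of_isIntertwiningMap ρ ρ fun g v => congrArg (· v) (hB g).eq.symm)
  exact ⟨c, congrArg IntertwiningMap.toLinearMap hc.symm⟩

variable [Fintype G]

noncomputable def charOperator : Module.End k V :=
  ∑ γ : G, ρ.character γ⁻¹ • ρ γ

theorem mul_charOperator (x : G) :
    ρ x * ρ.charOperator = ∑ γ : G, ρ.character (γ⁻¹ * x) • ρ γ := by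
  rw [charOperator, Finset.mul_sum]
  refine Fintype.sum_equiv (Equiv.mulLeft x) _ _ fun γ => ?_
  simp [← map_mul]

theorem charOperator_mul (x : G) :
    ρ.charOperator * ρ x = ∑ γ : G, ρ.character (x * γ⁻¹) • ρ γ := by
  rw [charOperator, Finset.sum_mul]
  refine Fintype.sum_equiv (Equiv.mulRight x) _ _ fun γ => ?_
  simp [← map_mul]

theorem commute_charOperator (g : G) : Commute (ρ g) ρ.charOperator := by
  simp only [Commute, SemiconjBy, mul_charOperator, charOperator_mul, char_mul_comm]

theorem trace_mul_charOperator (g : G) :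
    LinearMap.trace k V (ρ g * ρ.charOperator) =
      ∑ γ : G, ρ.character (g * γ) * ρ.character γ⁻¹ := by
  simp [charOperator, Finset.mul_sum, ← map_mul, character, mul_comm]

variable [IsAlgClosed k] [FiniteDimensional k V] [Invertible (Nat.card G : k)]

theorem trace_charOperator [ρ.IsIrreducible] :
    LinearMap.trace k V ρ.charOperator = Nat.card G := by
  have h := char_orthonormal ρ ρ
  rw [if_pos ⟨Equiv.refl ρ⟩, inv_mul_eq_one₀ (Invertible.ne_zero _)] at h
  have htrace := ρ.trace_mul_charOperator 1
  simp only [map_one, one_mul] at htrace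
  exact htrace.trans h.symm

include ρ in
theorem natCast_finrank_ne_zero [ρ.IsIrreducible] : (Module.finrank k V : k) ≠ 0 := by
  obtain ⟨c, hc⟩ := IsIrreducible.exists_eq_smul_one ρ ρ.commute_charOperator
  intro hd
  have h := ρ.trace_charOperator
  rw [hc, map_smul, LinearMap.trace_one, hd, smul_zero] at h
  exact Invertible.ne_zero _ h.symm

theorem charOperator_eq_smul_one [ρ.IsIrreducible] :
    ρ.charOperator = ((Nat.card G : k) / Module.finrank k V) • 1 := by
  obtain ⟨c, hc⟩ := IsIrreducible.exists_eq_smul_one ρ ρ.commute_charOperator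
  have h := ρ.trace_charOperator
  rw [hc, map_smul, LinearMap.trace_one, smul_eq_mul] at h
  rw [hc, ← h, mul_div_cancel_right₀ _ (natCast_finrank_ne_zero ρ)]

include ρ in
theorem natCard_div_finrank_ne_zero [ρ.IsIrreducible] :
    (Nat.card G : k) / Module.finrank k V ≠ 0 :=
  div_ne_zero (Invertible.ne_zero _) (natCast_finrank_ne_zero ρ)

theorem sum_character_mul_mul_character_inv [ρ.IsIrreducible] (g : G) :
    ∑ γ : G, ρ.character (g * γ) * ρ.character γ⁻¹ =
      (Nat.card G : k) / Module.finrank k V * ρ.character g := by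
  rw [← trace_mul_charOperator, charOperator_eq_smul_one, mul_smul_comm, mul_one, map_smul,
    smul_eq_mul, character]

theorem eq_smul_one_of_character_mul_eq [ρ.IsIrreducible] {x : G} {l : k}
    (h : ∀ g, ρ.character (g * x) = l * ρ.character g) : ρ x = l • 1 := by
  have hx : ρ x * ρ.charOperator = l • ρ.charOperator := by
    rw [mul_charOperator, charOperator, Finset.smul_sum]
    simp only [h, mul_smul]
  rw [charOperator_eq_smul_one, mul_smul_comm, mul_one, smul_comm] at hx
  exact smul_right_injective _ (natCard_div_finrank_ne_zero ρ) hx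

end Representation

/-- Key deduction of Section 2.2: for an irreducible representation `ρ` of a finite
group `G` on a finite-dimensional complex vector space `W` with character `χ`, if
`∑_γ χ(gxγ)·χ(γ⁻¹) = λ · ∑_γ χ(gγ)·χ(γ⁻¹)` for every `g ∈ G`, then `ρ x` is a scalar
multiple of the identity, i.e. `ρ x` is central in `ρ(G)`. -/
theorem central_of_translate_inner_products_proportional
    {G : Type*} [Group G] [Fintype G]
    {W : Type*} [AddCommGroup W] [Module ℂ W] [FiniteDimensional ℂ W] [Nontrivial W]
    (ρ : Representation ℂ G W)
    (hirr : ∀ p : Submodule ℂ W, (∀ g : G, ∀ x ∈ p, ρ g x ∈ p) → p = ⊥ ∨ p = ⊤)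
    (x : G) (l : ℂ)
    (hprop : ∀ g : G,
      (∑ γ : G, LinearMap.trace ℂ W (ρ (g * x * γ)) * LinearMap.trace ℂ W (ρ γ⁻¹))
        = l * ∑ γ : G, LinearMap.trace ℂ W (ρ (g * γ)) * LinearMap.trace ℂ W (ρ γ⁻¹)) :
    ∃ μ : ℂ, ρ x = μ • (1 : W →ₗ[ℂ] W) := by
  have := ρ.isIrreducible_of_forall_submodule hirr
  have : Invertible (Nat.card G : ℂ) := invertibleOfNonzero (Nat.cast_ne_zero.2 Nat.card_pos.ne')
  refine ⟨l, ρ.eq_smul_one_of_character_mul_eq fun g => ?_⟩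
  have h : ∑ γ, ρ.character (g * x * γ) * ρ.character γ⁻¹ =
      l * ∑ γ, ρ.character (g * γ) * ρ.character γ⁻¹ := hprop g
  rw [Representation.sum_character_mul_mul_character_inv,
    Representation.sum_character_mul_mul_character_inv] at h
  exact mul_left_cancel₀ (Representation.natCard_div_finrank_ne_zero ρ)
    (h.trans (mul_left_comm _ _ _))
end
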